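/- arXiv:2603.18363 — 4 statements merged into one kernel-verified Lean document; each statement's English description precedes it below -/
import Mathlib

section
/- For α > 1 and a non-uniform probability distribution p on a finite set with all positive masses, the escort distribution p_α strictly increases the probability of the mode: if y* is a strict maximizer of p, then p_α(y*) > p(y*). -/
/-- For α > 1 and a non-uniform distribution, the escort distribution strictly
increases the probability of the (strict) mode. -/
theorem escort_sharpens_mode {Y : Type*} [Fintype Y]
    (hcard : 2 ≤ Fintype.card Y)
    (p : Y → ℝ) (hpos : ∀ y, 0 < p y) (hsum : ∑ y, p y = 1)
    (ystar : Y) (hmode : ∀ y, y ≠ ystar → p y < p ystar)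
    (α : ℝ) (hα : 1 < α) :
    p ystar < p ystar ^ α / (∑ z, p z ^ α) := by
  have : Nonempty Y := Fintype.card_pos_iff.mp (by omega)
  have hS : 0 < ∑ z, p z ^ α :=
    Finset.sum_pos (fun z _ => Real.rpow_pos_of_pos (hpos z) α) Finset.univ_nonempty
  rw [lt_div_iff₀ hS]
  have hsplit : ∀ z : Y, p z ^ α = p z * p z ^ (α - 1) := by
    intro z
    rw [← Real.rpow_one_add' (le_of_lt (hpos z)) (by linarith)]
    ring_nf
  have hlt : ∑ z, p z ^ α < p ystar ^ (α - 1) := by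
    calc ∑ z, p z ^ α < ∑ z, p z * p ystar ^ (α - 1) := by
          obtain ⟨w, hw⟩ := Fintype.exists_ne_of_one_lt_card (by omega) ystar
          refine Finset.sum_lt_sum (fun z _ => ?_) ⟨w, Finset.mem_univ w, ?_⟩
          · rw [hsplit z]
            exact mul_le_mul_of_nonneg_left
              (Real.rpow_le_rpow (le_of_lt (hpos z))
                (by rcases eq_or_ne z ystar with h | h
                    · rw [h]
                    · exact (hmode z h).le) (by linarith)) (le_of_lt (hpos z))
          · rw [hsplit w]
            exact mul_lt_mul_of_pos_left
              (Real.rpow_lt_rpow (le_of_lt (hpos w)) (hmode w hw) (by linarith)) (hpos w)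
      _ = p ystar ^ (α - 1) := by rw [← Finset.sum_mul, hsum, one_mul]
  calc p ystar * ∑ z, p z ^ α < p ystar * p ystar ^ (α - 1) :=
        mul_lt_mul_of_pos_left hlt (hpos ystar)
    _ = p ystar ^ α := (hsplit ystar).symm
end

section
/- The Shannon entropy of the escort distribution p_α is non-increasing in α: for 0 < α₁ < α₂, H(p_{α₂}) ≤ H(p_{α₁}), where p_α(y) ∝ p(y)^α. -/
open Finset Real

/-- Gibbs' inequality: entropy ≤ cross-entropy. -/
lemma gibbs_ineq {Y : Type*} [Fintype Y] (q r : Y → ℝ)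
    (hq : ∀ y, 0 < q y) (hr : ∀ y, 0 < r y)
    (hq1 : ∑ y, q y = 1) (hr1 : ∑ y, r y = 1) :
    -∑ y, q y * Real.log (q y) ≤ -∑ y, q y * Real.log (r y) := by
  have key : ∑ y, q y * (Real.log (r y) - Real.log (q y)) ≤ 0 := by
    have h1 : ∀ y : Y, q y * (Real.log (r y) - Real.log (q y)) ≤ r y - q y := by
      intro y
      have hpos : 0 < r y / q y := div_pos (hr y) (hq y)
      have := Real.log_le_sub_one_of_pos hpos
      rw [Real.log_div (hr y).ne' (hq y).ne'] at this
      have := mul_le_mul_of_nonneg_left this (hq y).le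
      calc q y * (Real.log (r y) - Real.log (q y)) ≤ q y * (r y / q y - 1) := this
        _ = r y - q y := by
            rw [mul_sub, mul_one, mul_div_assoc', mul_div_cancel_left₀ _ (hq y).ne']
    calc ∑ y, q y * (Real.log (r y) - Real.log (q y)) ≤ ∑ y, (r y - q y) :=
          Finset.sum_le_sum fun y _ => h1 y
      _ = 0 := by rw [Finset.sum_sub_distrib, hq1, hr1, sub_self]
  have : ∑ y, q y * Real.log (r y) - ∑ y, q y * Real.log (q y) ≤ 0 := by
    rw [← Finset.sum_sub_distrib]
    simpa [mul_sub] using key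
  linarith

/-- Shannon entropy of the escort distribution is non-increasing in α. -/
theorem escort_entropy_antitone {Y : Type*} [Fintype Y]
    (p : Y → ℝ) (hpos : ∀ y, 0 < p y) (hsum : ∑ y, p y = 1)
    (α₁ α₂ : ℝ) (h1 : 0 < α₁) (h12 : α₁ < α₂) :
    -∑ y, (p y ^ α₂ / ∑ z, p z ^ α₂) * Real.log (p y ^ α₂ / ∑ z, p z ^ α₂) ≤
      -∑ y, (p y ^ α₁ / ∑ z, p z ^ α₁) * Real.log (p y ^ α₁ / ∑ z, p z ^ α₁) := by
  set Z₁ : ℝ := ∑ z, p z ^ α₁ with hZ₁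
  set Z₂ : ℝ := ∑ z, p z ^ α₂ with hZ₂
  have huniv : (Finset.univ : Finset Y).Nonempty := by
    by_contra h
    rw [Finset.not_nonempty_iff_eq_empty] at h
    rw [h, Finset.sum_empty] at hsum
    norm_num at hsum
  have hZ₁pos : 0 < Z₁ := Finset.sum_pos (fun z _ => Real.rpow_pos_of_pos (hpos z) _) huniv
  have hZ₂pos : 0 < Z₂ := Finset.sum_pos (fun z _ => Real.rpow_pos_of_pos (hpos z) _) huniv
  set q : Y → ℝ := fun y => p y ^ α₂ / Z₂ with hq
  set r : Y → ℝ := fun y => p y ^ α₁ / Z₁ with hrdef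
  have hqpos : ∀ y, 0 < q y := fun y => div_pos (Real.rpow_pos_of_pos (hpos y) _) hZ₂pos
  have hrpos : ∀ y, 0 < r y := fun y => div_pos (Real.rpow_pos_of_pos (hpos y) _) hZ₁pos
  have hq1 : ∑ y, q y = 1 := by rw [← Finset.sum_div]; exact div_self hZ₂pos.ne'
  have hr1 : ∑ y, r y = 1 := by rw [← Finset.sum_div]; exact div_self hZ₁pos.ne'
  -- Gibbs
  have hgibbs : -∑ y, q y * Real.log (q y) ≤ -∑ y, q y * Real.log (r y) :=
    gibbs_ineq q r hqpos hrpos hq1 hr1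
  -- mean of log p is larger under q
  have hmean : ∑ y, r y * Real.log (p y) ≤ ∑ y, q y * Real.log (p y) := by
    rw [hq, hrdef]
    simp only [div_mul_eq_mul_div]
    rw [← Finset.sum_div, ← Finset.sum_div, div_le_div_iff₀ hZ₁pos hZ₂pos]
    -- cross-multiplied: (∑ p^α₁ L) * Z₂ ≤ (∑ p^α₂ L) * Z₁
    rw [hZ₁, hZ₂, Finset.sum_mul, Finset.sum_mul]
    simp only [Finset.mul_sum]
    rw [← sub_nonneg, ← Finset.sum_sub_distrib]
    simp only [← Finset.sum_sub_distrib]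
    set F : Y → Y → ℝ := fun y z =>
      p y ^ α₂ * Real.log (p y) * p z ^ α₁ - p y ^ α₁ * Real.log (p y) * p z ^ α₂ with hF
    have hpair : ∀ y z, 0 ≤ F y z + F z y := by
      intro y z
      have hexp : ∀ w : Y, p w ^ α₂ = p w ^ α₁ * p w ^ (α₂ - α₁) := by
        intro w
        rw [← Real.rpow_add (hpos w)]; ring_nf
      have hkey : 0 ≤ (Real.log (p y) - Real.log (p z)) *
          (p y ^ α₂ * p z ^ α₁ - p y ^ α₁ * p z ^ α₂) := by
        rcases le_total (p y) (p z) with hle | hle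
        · have hlog : Real.log (p y) ≤ Real.log (p z) :=
            Real.log_le_log (hpos y) hle
          have hr : p y ^ (α₂ - α₁) ≤ p z ^ (α₂ - α₁) :=
            Real.rpow_le_rpow (hpos y).le hle (by linarith)
          have h2 : p y ^ α₂ * p z ^ α₁ ≤ p y ^ α₁ * p z ^ α₂ := by
            rw [hexp y, hexp z]
            have hy1 : (0:ℝ) ≤ p y ^ α₁ := (Real.rpow_pos_of_pos (hpos y) _).le
            have hz1 : (0:ℝ) ≤ p z ^ α₁ := (Real.rpow_pos_of_pos (hpos z) _).le
            nlinarith [mul_nonneg hy1 hz1]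
          nlinarith
        · have hlog : Real.log (p z) ≤ Real.log (p y) :=
            Real.log_le_log (hpos z) hle
          have hr : p z ^ (α₂ - α₁) ≤ p y ^ (α₂ - α₁) :=
            Real.rpow_le_rpow (hpos z).le hle (by linarith)
          have h2 : p y ^ α₁ * p z ^ α₂ ≤ p y ^ α₂ * p z ^ α₁ := by
            rw [hexp y, hexp z]
            have hy1 : (0:ℝ) ≤ p y ^ α₁ := (Real.rpow_pos_of_pos (hpos y) _).le
            have hz1 : (0:ℝ) ≤ p z ^ α₁ := (Real.rpow_pos_of_pos (hpos z) _).le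
            nlinarith [mul_nonneg hy1 hz1]
          nlinarith
      have heq : F y z + F z y = (Real.log (p y) - Real.log (p z)) *
          (p y ^ α₂ * p z ^ α₁ - p y ^ α₁ * p z ^ α₂) := by
        simp only [hF]; ring
      linarith [hkey, heq.ge, heq.le]
    have hsum2 : (0:ℝ) ≤ ∑ y, ∑ z, (F y z + F z y) :=
      Finset.sum_nonneg fun y _ => Finset.sum_nonneg fun z _ => hpair y z
    have hcomm : ∑ y : Y, ∑ z : Y, F z y = ∑ y : Y, ∑ z : Y, F y z := Finset.sum_comm
    have : (0:ℝ) ≤ 2 * ∑ y, ∑ z, F y z := by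
      calc (0:ℝ) ≤ ∑ y, ∑ z, (F y z + F z y) := hsum2
        _ = (∑ y, ∑ z, F y z) + (∑ y, ∑ z, F z y) := by
            simp [Finset.sum_add_distrib]
        _ = 2 * ∑ y, ∑ z, F y z := by rw [hcomm]; ring
    linarith
  -- express log q, log r
  have hlogr : ∀ y, Real.log (r y) = α₁ * Real.log (p y) - Real.log Z₁ := by
    intro y
    rw [hrdef]
    simp only
    rw [Real.log_div (Real.rpow_pos_of_pos (hpos y) _).ne' hZ₁pos.ne',
      Real.log_rpow (hpos y)]
  have expand : ∀ s : Y → ℝ, (∀ y, 0 < s y) → ∑ y, s y = 1 →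
      -∑ y, s y * Real.log (r y) = -(α₁ * ∑ y, s y * Real.log (p y)) + Real.log Z₁ := by
    intro s hs hs1
    have : ∑ y, s y * Real.log (r y)
        = ∑ y, (α₁ * (s y * Real.log (p y)) - s y * Real.log Z₁) := by
      refine Finset.sum_congr rfl fun y _ => ?_
      rw [hlogr y]; ring
    rw [this, Finset.sum_sub_distrib, ← Finset.mul_sum, ← Finset.sum_mul, hs1]
    ring
  have hcross : -∑ y, q y * Real.log (r y) ≤ -∑ y, r y * Real.log (r y) := by
    rw [expand q hqpos hq1, expand r hrpos hr1]
    have := mul_le_mul_of_nonneg_left hmean h1.le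
    linarith
  exact le_trans hgibbs hcross
end

section
/- (Mode preference under majority voting) Let p be a distribution on a finite set Y whose unique mode is y*, and draw an i.i.d. batch of size N ≥ 2. For any y' ≠ y* with p(y') > 0, the probability that y' is the strict mode of the empirical batch is strictly less than the probability that y* is the strict mode of the batch. -/
open Finset

private lemma prod_count_aux {Y : Type*} [Fintype Y] [DecidableEq Y] {N : ℕ}
    (f : Y → ℝ) (ω : Fin N → Y) :
    ∏ i, f (ω i) = ∏ y : Y, f y ^ (Finset.univ.filter (fun i => ω i = y)).card := by
  rw [← Finset.prod_fiberwise_of_maps_to (g := ω) (fun i _ => Finset.mem_univ (ω i))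
      (fun i => f (ω i))]
  refine Finset.prod_congr rfl fun y _ => ?_
  rw [Finset.prod_congr rfl (fun i hi => ?_), Finset.prod_const]
  rw [Finset.mem_filter] at hi
  rw [hi.2]

/-- Mode preference under majority voting: in an i.i.d. batch of size N ≥ 2, a
suboptimal element y' is strictly less likely to be the strict empirical mode
than the unique mode y* of the sampling distribution. -/
theorem majority_vote_prefers_mode {Y : Type*} [Fintype Y] [DecidableEq Y]
    (p : Y → ℝ) (hpos : ∀ y, 0 < p y) (hsum : ∑ y, p y = 1)
    (ystar : Y) (hmode : ∀ y, y ≠ ystar → p y < p ystar)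
    (y' : Y) (hne : y' ≠ ystar)
    (N : ℕ) (hN : 2 ≤ N) :
    ∑ ω ∈ Finset.univ.filter (fun ω : Fin N → Y =>
        ∀ z, z ≠ y' →
          (Finset.univ.filter (fun i => ω i = z)).card <
            (Finset.univ.filter (fun i => ω i = y')).card),
      ∏ i, p (ω i) <
    ∑ ω ∈ Finset.univ.filter (fun ω : Fin N → Y =>
        ∀ z, z ≠ ystar →
          (Finset.univ.filter (fun i => ω i = z)).card <
            (Finset.univ.filter (fun i => ω i = ystar)).card),
      ∏ i, p (ω i) := by
  classical
  set σ : Y ≃ Y := Equiv.swap y' ystar with hσdef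
  set cnt : (Fin N → Y) → Y → ℕ :=
    fun ω y => (Finset.univ.filter (fun i => ω i = y)).card with hcnt
  set A : Finset (Fin N → Y) := Finset.univ.filter (fun ω : Fin N → Y =>
        ∀ z, z ≠ y' → cnt ω z < cnt ω y') with hA
  set B : Finset (Fin N → Y) := Finset.univ.filter (fun ω : Fin N → Y =>
        ∀ z, z ≠ ystar → cnt ω z < cnt ω ystar) with hB
  -- basic facts about σ
  have hσinv : ∀ x, σ (σ x) = x := fun x => Equiv.swap_apply_self _ _ x
  have hσy' : σ y' = ystar := Equiv.swap_apply_left _ _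
  have hσystar : σ ystar = y' := Equiv.swap_apply_right _ _
  have hcnt_comp : ∀ (ω : Fin N → Y) (z : Y), cnt (fun i => σ (ω i)) z = cnt ω (σ z) := by
    intro ω z
    simp only [hcnt]
    congr 1
    apply Finset.filter_congr
    intro i _
    constructor
    · intro h; rw [← h, hσinv]
    · intro h; rw [h, hσinv]
  -- termwise strict inequality
  have hterm : ∀ ω ∈ A, ∏ i, p (ω i) < ∏ i, p (σ (ω i)) := by
    intro ω hω
    rw [hA, Finset.mem_filter] at hω
    have hω := hω.2
    have hab : cnt ω ystar < cnt ω y' := hω ystar (Ne.symm hne)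
    rw [prod_count_aux p ω, prod_count_aux p (fun i => σ (ω i))]
    have hrw : ∀ y, (Finset.univ.filter (fun i => σ (ω i) = y)).card = cnt ω (σ y) :=
      fun y => hcnt_comp ω y
    have : (∏ y : Y, p y ^ (Finset.univ.filter (fun i => σ (ω i) = y)).card)
        = ∏ y : Y, p (σ y) ^ cnt ω y := by
      rw [Finset.prod_congr rfl (fun y _ => by rw [hrw y])]
      rw [← Equiv.prod_comp σ (fun y => p (σ y) ^ cnt ω y)]
      exact Finset.prod_congr rfl (fun y _ => by rw [hσinv])
    rw [this]
    -- now compare ∏ y, p y ^ cnt ω y < ∏ y, p (σ y) ^ cnt ω y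
    have huniv : (Finset.univ : Finset Y)
        = insert y' (insert ystar (Finset.univ \ {y', ystar})) := by
      ext x
      by_cases hx1 : x = y' <;> by_cases hx2 : x = ystar <;> simp [hx1, hx2]
    have hy'ni : y' ∉ insert ystar (Finset.univ \ {y', ystar}) := by simp [hne]
    have hysni : ystar ∉ (Finset.univ \ {y', ystar}) := by simp
    rw [huniv, Finset.prod_insert hy'ni, Finset.prod_insert hysni,
        Finset.prod_insert hy'ni, Finset.prod_insert hysni]
    have hrest : ∀ x ∈ Finset.univ \ {y', ystar},
        p (σ x) ^ cnt ω x = p x ^ cnt ω x := by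
      intro x hx
      simp only [Finset.mem_sdiff, Finset.mem_insert, Finset.mem_singleton] at hx
      rw [Equiv.swap_apply_of_ne_of_ne (by tauto) (by tauto)]
    rw [Finset.prod_congr rfl hrest, hσy', hσystar]
    set a := cnt ω y' with ha
    set b := cnt ω ystar with hb
    have hP : (0:ℝ) < ∏ x ∈ Finset.univ \ {y', ystar}, p x ^ cnt ω x :=
      Finset.prod_pos (fun x _ => pow_pos (hpos x) _)
    have hmain : p y' ^ a * p ystar ^ b < p ystar ^ a * p y' ^ b := by
      obtain ⟨k, hk⟩ : ∃ k, a = b + (k + 1) := ⟨a - b - 1, by omega⟩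
      have hlt : p y' ^ (k + 1) < p ystar ^ (k + 1) :=
        pow_lt_pow_left₀ (hmode y' hne) (le_of_lt (hpos y')) (Nat.succ_ne_zero k)
      have hpb : (0:ℝ) < p y' ^ b * p ystar ^ b :=
        mul_pos (pow_pos (hpos y') b) (pow_pos (hpos ystar) b)
      have e1 : p y' ^ a = p y' ^ b * p y' ^ (k + 1) := by rw [hk, pow_add]
      have e2 : p ystar ^ a = p ystar ^ b * p ystar ^ (k + 1) := by rw [hk, pow_add]
      rw [e1, e2]
      calc p y' ^ b * p y' ^ (k + 1) * p ystar ^ b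
          = (p y' ^ b * p ystar ^ b) * p y' ^ (k + 1) := by ring
        _ < (p y' ^ b * p ystar ^ b) * p ystar ^ (k + 1) := mul_lt_mul_of_pos_left hlt hpb
        _ = p ystar ^ b * p ystar ^ (k + 1) * p y' ^ b := by ring
    calc p y' ^ a * (p ystar ^ b * ∏ x ∈ Finset.univ \ {y', ystar}, p x ^ cnt ω x)
        = (p y' ^ a * p ystar ^ b) * ∏ x ∈ Finset.univ \ {y', ystar}, p x ^ cnt ω x := by ring
      _ < (p ystar ^ a * p y' ^ b) * ∏ x ∈ Finset.univ \ {y', ystar}, p x ^ cnt ω x :=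
          mul_lt_mul_of_pos_right hmain hP
      _ = p ystar ^ a * (p y' ^ b * ∏ x ∈ Finset.univ \ {y', ystar}, p x ^ cnt ω x) := by ring
  -- the map ω ↦ σ ∘ ω sends A into B, injectively
  have hmaps : ∀ ω ∈ A, (fun i => σ (ω i)) ∈ B := by
    intro ω hω
    rw [hA, Finset.mem_filter] at hω
    rw [hB, Finset.mem_filter]
    refine ⟨Finset.mem_univ _, fun z hz => ?_⟩
    rw [hcnt_comp, hcnt_comp, hσystar]
    apply hω.2
    intro h
    apply hz
    rw [← hσinv z, h, hσy']
  have hinj : ∀ ω₁ ∈ A, ∀ ω₂ ∈ A, (fun i => σ (ω₁ i)) = (fun i => σ (ω₂ i)) → ω₁ = ω₂ := by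
    intro ω₁ _ ω₂ _ h
    funext i
    have := congrFun h i
    simpa using σ.injective this
  have hAne : A.Nonempty := by
    refine ⟨fun _ => y', ?_⟩
    rw [hA, Finset.mem_filter]
    refine ⟨Finset.mem_univ _, fun z hz => ?_⟩
    simp only [hcnt]
    rw [Finset.filter_false_of_mem (fun i _ => fun h => hz h.symm)]
    simp only [Finset.filter_true, Finset.card_empty, Finset.card_univ, Fintype.card_fin]
    omega
  calc ∑ ω ∈ A, ∏ i, p (ω i)
      < ∑ ω ∈ A, ∏ i, p (σ (ω i)) := Finset.sum_lt_sum_of_nonempty hAne hterm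
    _ = ∑ ω ∈ A.image (fun ω i => σ (ω i)), ∏ i, p (ω i) := by
        rw [Finset.sum_image]
        exact hinj
    _ ≤ ∑ ω ∈ B, ∏ i, p (ω i) := by
        apply Finset.sum_le_sum_of_subset_of_nonneg
        · intro ω hω
          rw [Finset.mem_image] at hω
          obtain ⟨ω', hω', rfl⟩ := hω
          exact hmaps ω' hω'
        · intro ω _ _
          exact le_of_lt (Finset.prod_pos (fun i _ => hpos (ω i)))
end

section
/- (Entropy derivative sign) For a full-support non-uniform distribution p on a finite set and the escort family p_α(y) ∝ p(y)^α, the map α ↦ H(p_α) is strictly decreasing at α = 1; equivalently, d/dα H(p_α) |_{α=1} = −Var_{y∼p}(log p(y)) < 0. -/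
/-!
Write `Z(α) = ∑ p^α`. Since `log (p^α / Z) = α log p - log Z`, the escort entropy is
`log Z - α Z'/Z`, and differentiating gives `-α (Z''/Z - (Z'/Z)²)`, i.e. `-α` times the
variance of `log p` under the escort distribution `p_α`. At `α = 1` we have `p_1 = p`, and
this variance is positive because `log p` is not constant.
-/

open Real Finset

section Escort

variable {Y : Type*} [Fintype Y]

noncomputable def escortEntropy (p : Y → ℝ) (α : ℝ) : ℝ :=
  -∑ y, (p y ^ α / ∑ z, p z ^ α) * log (p y ^ α / ∑ z, p z ^ α)

lemma neg_sum_div_mul_log_div [Nonempty Y] {w : Y → ℝ} (hw : ∀ y, 0 < w y) :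
    -∑ y, (w y / ∑ z, w z) * log (w y / ∑ z, w z) =
      log (∑ z, w z) - (∑ y, w y * log (w y)) / ∑ z, w z := by
  have hS : 0 < ∑ z, w z := sum_pos (fun z _ => hw z) univ_nonempty
  simp_rw [log_div (hw _).ne' hS.ne', div_mul_eq_mul_div, ← sum_div, mul_sub, sum_sub_distrib,
    ← sum_mul]
  field_simp
  ring

lemma escortEntropy_eq [Nonempty Y] {p : Y → ℝ} (hp : ∀ y, 0 < p y) (α : ℝ) :
    escortEntropy p α =
      log (∑ y, p y ^ α) - α * (∑ y, p y ^ α * log (p y)) / ∑ y, p y ^ α := by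
  rw [escortEntropy, neg_sum_div_mul_log_div fun y => rpow_pos_of_pos (hp y) α]
  simp_rw [log_rpow (hp _), mul_left_comm _ α, ← mul_sum]

lemma hasDerivAt_sum_rpow_mul {p : Y → ℝ} (hp : ∀ y, 0 < p y) (g : Y → ℝ) (α : ℝ) :
    HasDerivAt (fun a => ∑ y, p y ^ a * g y) (∑ y, p y ^ α * log (p y) * g y) α :=
  HasDerivAt.fun_sum fun y _ => ((hasStrictDerivAt_const_rpow (hp y) α).hasDerivAt).mul_const _

lemma hasDerivAt_sum_rpow {p : Y → ℝ} (hp : ∀ y, 0 < p y) (α : ℝ) :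
    HasDerivAt (fun a => ∑ y, p y ^ a) (∑ y, p y ^ α * log (p y)) α := by
  simpa using hasDerivAt_sum_rpow_mul hp 1 α

theorem hasDerivAt_escortEntropy [Nonempty Y] {p : Y → ℝ} (hp : ∀ y, 0 < p y) (α : ℝ) :
    HasDerivAt (escortEntropy p)
      (-α * ((∑ y, p y ^ α * log (p y) ^ 2) / (∑ y, p y ^ α)
        - ((∑ y, p y ^ α * log (p y)) / ∑ y, p y ^ α) ^ 2)) α := by
  have hZ : (∑ y, p y ^ α) ≠ 0 :=
    (sum_pos (fun y _ => rpow_pos_of_pos (hp y) α) univ_nonempty).ne'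
  have hZ' := hasDerivAt_sum_rpow hp α
  have hZ'' := hasDerivAt_sum_rpow_mul hp (fun y => log (p y)) α
  rw [funext (escortEntropy_eq hp)]
  refine ((hZ'.log hZ).sub (((hasDerivAt_id' α).mul hZ'').div hZ' hZ)).congr_deriv ?_
  simp only [Pi.mul_apply, mul_assoc, ← sq]
  field_simp
  ring

lemma sum_mul_sq_sub_sq_sum {p : Y → ℝ} (hsum : ∑ y, p y = 1) (f : Y → ℝ) :
    ∑ y, p y * f y ^ 2 - (∑ y, p y * f y) ^ 2 = ∑ y, p y * (f y - ∑ z, p z * f z) ^ 2 := by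
  set m := ∑ z, p z * f z
  have hexpand : ∀ y, p y * (f y - m) ^ 2 = p y * f y ^ 2 - 2 * m * (p y * f y) + m ^ 2 * p y :=
    fun y => by ring
  rw [sum_congr rfl fun y _ => hexpand y, sum_add_distrib, sum_sub_distrib, ← mul_sum, ← mul_sum,
    hsum]
  ring

lemma sum_mul_sq_sub_sq_sum_pos {p : Y → ℝ} (hpos : ∀ y, 0 < p y) (hsum : ∑ y, p y = 1)
    {f : Y → ℝ} {y₁ y₂ : Y} (hf : f y₁ ≠ f y₂) :
    0 < ∑ y, p y * f y ^ 2 - (∑ y, p y * f y) ^ 2 := by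
  rw [sum_mul_sq_sub_sq_sum hsum]
  set m := ∑ z, p z * f z
  have hnonneg : ∀ y ∈ univ, 0 ≤ p y * (f y - m) ^ 2 :=
    fun y _ => mul_nonneg (hpos y).le (sq_nonneg _)
  obtain ⟨y, hy⟩ : ∃ y, f y ≠ m := by
    by_contra! h
    exact hf ((h y₁).trans (h y₂).symm)
  exact sum_pos' hnonneg
    ⟨y, mem_univ y, mul_pos (hpos y) (pow_two_pos_of_ne_zero (sub_ne_zero.mpr hy))⟩

end Escort

theorem escort_entropy_deriv_at_one_general {Y : Type*} [Fintype Y]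
    (p : Y → ℝ) (hpos : ∀ y, 0 < p y) (hsum : ∑ y, p y = 1)
    (hnonunif : ∃ y₁ y₂, p y₁ ≠ p y₂) :
    HasDerivAt
      (fun α : ℝ =>
        -∑ y, (p y ^ α / ∑ z, p z ^ α) * Real.log (p y ^ α / ∑ z, p z ^ α))
      (-((∑ y, p y * Real.log (p y) ^ 2) - (∑ y, p y * Real.log (p y)) ^ 2)) 1 ∧
    -((∑ y, p y * Real.log (p y) ^ 2) - (∑ y, p y * Real.log (p y)) ^ 2) < 0 := by
  obtain ⟨y₁, y₂, hne⟩ := hnonunif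
  have : Nonempty Y := ⟨y₁⟩
  have hlog_ne : log (p y₁) ≠ log (p y₂) :=
    fun h => hne (log_injOn_pos (hpos y₁) (hpos y₂) h)
  refine ⟨?_, neg_neg_of_pos (sum_mul_sq_sub_sq_sum_pos hpos hsum hlog_ne)⟩
  refine (hasDerivAt_escortEntropy hpos 1).congr_deriv ?_
  simp [hsum]

/-- Entropy derivative sign: along the escort family, the entropy has
derivative −Var_{y∼p}(log p(y)) < 0 at α = 1. -/
theorem escort_entropy_deriv_at_one {Y : Type*} [Fintype Y]
    (hcard : 2 ≤ Fintype.card Y)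
    (p : Y → ℝ) (hpos : ∀ y, 0 < p y) (hsum : ∑ y, p y = 1)
    (hnonunif : ∃ y₁ y₂, p y₁ ≠ p y₂) :
    HasDerivAt
      (fun α : ℝ =>
        -∑ y, (p y ^ α / ∑ z, p z ^ α) * Real.log (p y ^ α / ∑ z, p z ^ α))
      (-((∑ y, p y * Real.log (p y) ^ 2) - (∑ y, p y * Real.log (p y)) ^ 2)) 1 ∧
    -((∑ y, p y * Real.log (p y) ^ 2) - (∑ y, p y * Real.log (p y)) ^ 2) < 0 :=
  escort_entropy_deriv_at_one_general p hpos hsum hnonunif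
end
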